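/- arXiv:2410.18837 — 8 statements merged into one kernel-verified Lean document; each statement's English description precedes it below -/
import Mathlib

section
/- Fix an integer p ≥ 1, a symmetric positive definite matrix Σ ∈ ℝ^{p×p}, a real τ > 0, and set n = tr((Σ + τ I)^{-1} Σ) and Ω = (1/n) tr(Σ² (Σ + τ I)^{-2}); assume 0 < Ω < 1. Fix β* ∈ ℝ^p and σ² ≥ 0, let θ₁ = (Σ + τ I)^{-1} Σ, and define the asymptotic surrogate-to-target risk R̄(b) = (b − β*)ᵀ θ₁ᵀ Σ θ₁ (b − β*) + γ²(b) · tr(Σ²(Σ+τI)^{-2})/p + β*ᵀ (I − θ₁)ᵀ Σ (I − θ₁) β* − 2 β*ᵀ (I − θ₁)ᵀ Σ θ₁ (b − β*), where γ²(b) = (p/n) · (σ² + τ² ‖(Σ + τ I)^{-1} Σ^{1/2} b‖²) / (1 − Ω). Then the vector β^{s*} = ((Σ + τ I)^{-1} Σ + (Ω τ² / (1 − Ω)) Σ^{-1} (Σ + τ I)^{-1})^{-1} β* is the unique global minimizer of R̄ over b ∈ ℝ^p. -/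
open Matrix

section

open scoped ComplexOrder

/-- The positive semidefinite square root, as `Matrix.PosSemidef.sqrt` was defined in Mathlib
(Dec 2024); it has since been removed in favour of `CFC.sqrt`. -/
noncomputable def Matrix.PosSemidef.sqrt {n : Type*} [Fintype n] [DecidableEq n] {𝕜 : Type*}
    [RCLike 𝕜] {A : Matrix n n 𝕜} (hA : A.PosSemidef) : Matrix n n 𝕜 :=
  hA.1.eigenvectorUnitary.1 * diagonal ((↑) ∘ (√·) ∘ hA.1.eigenvalues) *
  (star hA.1.eigenvectorUnitary : Matrix n n 𝕜)

end

/-!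
Write `A = Σ + τI`, `θ₁ = A⁻¹Σ` and `c = Ωτ²/(1 - Ω)`. Since `tr(Σ²A⁻²) = nΩ`, the variance term
is `c ‖A⁻¹Σ^{1/2} b‖² + Ωσ²/(1 - Ω)`, and completing the square turns `R̄` into the
quadratic `bᵀPb - 2 bᵀθ₁ᵀΣβ* + const` with `P = θ₁ᵀΣθ₁ + c (A⁻¹Σ^{1/2})ᵀ(A⁻¹Σ^{1/2})`, which is
positive definite, so its unique minimiser solves `Pb = θ₁ᵀΣβ*`. All matrices involved are
functions of `Σ` and commute, which gives `P = θ₁ᵀΣ G` with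
`G = A⁻¹Σ + c Σ⁻¹A⁻¹`; hence `G` is invertible because `P` is, and `b = G⁻¹β*`.
-/

namespace Matrix

open scoped ComplexOrder

variable {n m α : Type*} [Fintype n] [Fintype m]

theorem PosSemidef.sqrt_mul_self {𝕜 : Type*} [RCLike 𝕜] [DecidableEq n] {A : Matrix n n 𝕜}
    (hA : A.PosSemidef) : hA.sqrt * hA.sqrt = A := by
  have hU : star (hA.1.eigenvectorUnitary : Matrix n n 𝕜) *
      (hA.1.eigenvectorUnitary : Matrix n n 𝕜) = 1 :=
    UnitaryGroup.star_mul_self _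
  conv_rhs => rw [hA.1.spectral_theorem, Unitary.conjStarAlgAut_apply]
  unfold PosSemidef.sqrt
  simp only [mul_assoc]
  rw [← mul_assoc (star _) (hA.1.eigenvectorUnitary : Matrix n n 𝕜), hU, one_mul,
    ← mul_assoc (diagonal _) (diagonal _), diagonal_mul_diagonal]
  congr 3
  funext i
  simp [← RCLike.ofReal_mul, Real.mul_self_sqrt (hA.eigenvalues_nonneg i)]

theorem PosSemidef.isHermitian_sqrt {𝕜 : Type*} [RCLike 𝕜] [DecidableEq n] {A : Matrix n n 𝕜}
    (hA : A.PosSemidef) : hA.sqrt.IsHermitian := by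
  unfold PosSemidef.sqrt
  rw [star_eq_conjTranspose]
  exact isHermitian_mul_mul_conjTranspose _
    (isHermitian_diagonal_iff.mpr fun _ ↦ RCLike.conj_ofReal _)

theorem PosSemidef.commute_sqrt_add_smul_one {𝕜 : Type*} [RCLike 𝕜] [DecidableEq n]
    {A : Matrix n n 𝕜} (hA : A.PosSemidef) (τ : 𝕜) : Commute hA.sqrt (A + τ • 1) := by
  have h := ((Commute.refl hA.sqrt).mul_right (Commute.refl hA.sqrt)).add_right
    ((Commute.one_right hA.sqrt).smul_right τ)
  rwa [hA.sqrt_mul_self] at h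

theorem commute_nonsing_inv_right [CommRing α] [DecidableEq n] {A B : Matrix n n α}
    (h : Commute A B) : Commute A B⁻¹ := by
  by_cases hB : IsUnit B.det
  · let _ := B.invertibleOfIsUnitDet hB
    rw [← invOf_eq_nonsing_inv]
    exact h.invOf_right
  · rw [nonsing_inv_apply_not_isUnit B hB]
    exact Commute.zero_right A

section CommRing

variable [CommRing α]

theorem IsSymm.dotProduct_mulVec_comm {W : Matrix n n α} (hW : W.IsSymm) (x y : n → α) :
    x ⬝ᵥ W *ᵥ y = y ⬝ᵥ W *ᵥ x := by
  rw [← dotProduct_transpose_mulVec, hW.eq]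

theorem mulVec_dotProduct_mulVec (E F : Matrix m n α) (x y : n → α) :
    E *ᵥ x ⬝ᵥ F *ᵥ y = x ⬝ᵥ (Eᵀ * F) *ᵥ y := by
  rw [dotProduct_comm, ← dotProduct_transpose_mulVec, mulVec_mulVec]

theorem IsSymm.sub_dotProduct_mulVec_sub {W : Matrix n n α} (hW : W.IsSymm) (x y : n → α) :
    (x - y) ⬝ᵥ W *ᵥ (x - y) = x ⬝ᵥ W *ᵥ x - 2 * (x ⬝ᵥ W *ᵥ y) + y ⬝ᵥ W *ᵥ y := by
  simp only [mulVec_sub, sub_dotProduct, dotProduct_sub]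
  rw [hW.dotProduct_mulVec_comm y x]
  ring

theorem IsSymm.mulVec_sub_dotProduct_mulVec_mulVec_sub {W : Matrix m m α} (hW : W.IsSymm)
    (X : Matrix m n α) (x : n → α) (y : m → α) :
    (X *ᵥ x - y) ⬝ᵥ W *ᵥ (X *ᵥ x - y) =
      x ⬝ᵥ (Xᵀ * W * X) *ᵥ x - 2 * (x ⬝ᵥ (Xᵀ * W) *ᵥ y) + y ⬝ᵥ W *ᵥ y := by
  rw [hW.sub_dotProduct_mulVec_sub, mulVec_mulVec _ W X, mulVec_dotProduct_mulVec,
    ← Matrix.mul_assoc, ← mulVec_mulVec y Xᵀ W, dotProduct_transpose_mulVec,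
    dotProduct_comm (W *ᵥ y)]

theorem IsSymm.shrinkage_risk_eq [DecidableEq n] {W : Matrix n n α} (hW : W.IsSymm)
    (θ : Matrix n n α) (x β : n → α) :
    θ *ᵥ (x - β) ⬝ᵥ W *ᵥ (θ *ᵥ (x - β)) + (1 - θ) *ᵥ β ⬝ᵥ W *ᵥ ((1 - θ) *ᵥ β)
        - 2 * ((1 - θ) *ᵥ β ⬝ᵥ W *ᵥ (θ *ᵥ (x - β))) =
      x ⬝ᵥ (θᵀ * W * θ) *ᵥ x - 2 * (x ⬝ᵥ (θᵀ * W) *ᵥ β) + β ⬝ᵥ W *ᵥ β := by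
  have hsub : θ *ᵥ (x - β) - (1 - θ) *ᵥ β = θ *ᵥ x - β := by
    rw [mulVec_sub, sub_mulVec, one_mulVec]; abel
  rw [hW.dotProduct_mulVec_comm ((1 - θ) *ᵥ β) (θ *ᵥ (x - β)),
    ← hW.mulVec_sub_dotProduct_mulVec_mulVec_sub, ← hsub, hW.sub_dotProduct_mulVec_sub]
  ring

theorem mul_mulVec_nonsing_inv_mulVec [DecidableEq n] {Q G : Matrix n n α}
    (h : IsUnit (Q * G).det) (v : n → α) : (Q * G) *ᵥ (G⁻¹ *ᵥ v) = Q *ᵥ v := by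
  rw [det_mul] at h
  rw [mulVec_mulVec, mul_assoc, mul_nonsing_inv _ (isUnit_of_mul_isUnit_right h), mul_one]

theorem ridge_normal_matrix_eq [DecidableEq n] {A C S : Matrix n n α}
    (hS : S.IsSymm) (hA : A.IsSymm) (hSA : Commute S A) (hSS : S * S = C) (hC : IsUnit C.det)
    (c : α) :
    (A⁻¹ * C)ᵀ * C * (A⁻¹ * C) + c • ((A⁻¹ * S)ᵀ * (A⁻¹ * S)) =
      (A⁻¹ * C)ᵀ * C * (A⁻¹ * C + c • (C⁻¹ * A⁻¹)) := by
  have hSAi : Commute S (A⁻¹ * A⁻¹) :=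
    (commute_nonsing_inv_right hSA).mul_right (commute_nonsing_inv_right hSA)
  rw [mul_add, mul_smul_comm, Matrix.mul_assoc _ C (C⁻¹ * A⁻¹),
    mul_nonsing_inv_cancel_left _ _ hC]
  simp only [transpose_mul, transpose_nonsing_inv, hS.eq, hA.eq, ← hSS, mul_assoc]
  rw [← mul_assoc A⁻¹ A⁻¹ S, ← hSAi.eq]

end CommRing

theorem PosDef.transpose_mul_mul_add_smul_gram [DecidableEq n] {C θ : Matrix n n ℝ}
    (hC : C.PosDef) (hθ : IsUnit θ) {c : ℝ} (hc : 0 ≤ c) (Y : Matrix m n ℝ) :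
    (θᵀ * C * θ + c • (Yᵀ * Y)).PosDef :=
  (hC.conjTranspose_mul_mul_same (mulVec_injective_iff_isUnit.mpr hθ)).add_posSemidef
    ((posSemidef_conjTranspose_mul_self Y).smul hc)

theorem PosDef.quadratic_lt_of_mulVec_eq {P : Matrix n n ℝ} (hP : P.PosDef) {x₀ x q : n → ℝ}
    (hx₀ : P *ᵥ x₀ = q) (hx : x ≠ x₀) :
    x₀ ⬝ᵥ P *ᵥ x₀ - 2 * (x₀ ⬝ᵥ q) < x ⬝ᵥ P *ᵥ x - 2 * (x ⬝ᵥ q) := by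
  have hpos := hP.dotProduct_mulVec_pos (sub_ne_zero.mpr hx)
  rw [star_trivial, (isHermitian_iff_isSymm.mp hP.isHermitian).sub_dotProduct_mulVec_sub,
    hx₀] at hpos
  rw [hx₀]
  linarith

end Matrix

theorem optimal_surrogate_unique_minimizer_general
    (p : ℕ) (hp : 1 ≤ p)
    (Cov : Matrix (Fin p) (Fin p) ℝ) (hCov : Cov.PosDef)
    (τ : ℝ) (hτ : 0 < τ)
    (n Ω : ℝ)
    (hΩ : Ω = (1 / n) * (Cov ^ 2 * ((Cov + τ • (1 : Matrix (Fin p) (Fin p) ℝ))⁻¹) ^ 2).trace)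
    (hΩ0 : 0 < Ω) (hΩ1 : Ω < 1)
    (βstar : Fin p → ℝ) (σsq : ℝ)
    (θ1 : Matrix (Fin p) (Fin p) ℝ)
    (hθ1 : θ1 = (Cov + τ • (1 : Matrix (Fin p) (Fin p) ℝ))⁻¹ * Cov)
    (γsq : (Fin p → ℝ) → ℝ)
    (hγ : ∀ b : Fin p → ℝ, γsq b = ((p : ℝ) / n) * (σsq + τ ^ 2 *
      ((((Cov + τ • (1 : Matrix (Fin p) (Fin p) ℝ))⁻¹ * hCov.posSemidef.sqrt).mulVec b) ⬝ᵥ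
       (((Cov + τ • (1 : Matrix (Fin p) (Fin p) ℝ))⁻¹ * hCov.posSemidef.sqrt).mulVec b))) / (1 - Ω))
    (Rbar : (Fin p → ℝ) → ℝ)
    (hR : ∀ b : Fin p → ℝ, Rbar b =
      (θ1.mulVec (b - βstar)) ⬝ᵥ (Cov.mulVec (θ1.mulVec (b - βstar)))
      + γsq b * (Cov ^ 2 * ((Cov + τ • (1 : Matrix (Fin p) (Fin p) ℝ))⁻¹) ^ 2).trace / p
      + ((1 - θ1).mulVec βstar) ⬝ᵥ (Cov.mulVec ((1 - θ1).mulVec βstar))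
      - 2 * (((1 - θ1).mulVec βstar) ⬝ᵥ (Cov.mulVec (θ1.mulVec (b - βstar)))))
    (βs : Fin p → ℝ)
    (hβs : βs = (((Cov + τ • (1 : Matrix (Fin p) (Fin p) ℝ))⁻¹ * Cov
        + (Ω * τ ^ 2 / (1 - Ω)) • (Cov⁻¹ * (Cov + τ • (1 : Matrix (Fin p) (Fin p) ℝ))⁻¹))⁻¹).mulVec
        βstar) :
    ∀ b : Fin p → ℝ, b ≠ βs → Rbar βs < Rbar b := by
  intro b hb
  set A := Cov + τ • (1 : Matrix (Fin p) (Fin p) ℝ)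
  set S := hCov.posSemidef.sqrt
  set c := Ω * τ ^ 2 / (1 - Ω)
  set P := θ1ᵀ * Cov * θ1 + c • ((A⁻¹ * S)ᵀ * (A⁻¹ * S))
  have hA : A.PosDef := hCov.add_posSemidef (PosSemidef.one.smul hτ.le)
  have hRbar : ∀ x, Rbar x = x ⬝ᵥ P *ᵥ x - 2 * (x ⬝ᵥ (θ1ᵀ * Cov) *ᵥ βstar)
      + (βstar ⬝ᵥ Cov *ᵥ βstar + Ω * σsq / (1 - Ω)) := by
    intro x
    have hn0 : n ≠ 0 := by rintro rfl; rw [div_zero, zero_mul] at hΩ; linarith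
    have hp0 : (p : ℝ) ≠ 0 := (zero_lt_one.trans_le (Nat.one_le_cast.mpr hp)).ne'
    have hΩ1' : 1 - Ω ≠ 0 := (sub_pos.mpr hΩ1).ne'
    have hT : (Cov ^ 2 * (A⁻¹) ^ 2).trace = n * Ω := by rw [hΩ]; field_simp
    have hpenalty : γsq x * (Cov ^ 2 * (A⁻¹) ^ 2).trace / p
        = c * (x ⬝ᵥ ((A⁻¹ * S)ᵀ * (A⁻¹ * S)) *ᵥ x) + Ω * σsq / (1 - Ω) := by
      rw [hγ, hT, mulVec_dotProduct_mulVec]; simp only [c]; field_simp; ring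
    rw [hR, hpenalty]
    simp only [P, add_mulVec, smul_mulVec, dotProduct_add, dotProduct_smul, smul_eq_mul]
    linear_combination
      (isHermitian_iff_isSymm.mp hCov.isHermitian).shrinkage_risk_eq θ1 x βstar
  have hP : P.PosDef := hCov.transpose_mul_mul_add_smul_gram
    (hθ1 ▸ hA.inv.isUnit.mul hCov.isUnit) (div_nonneg (by positivity) (sub_pos.mpr hΩ1).le) _
  have hPG : P = θ1ᵀ * Cov * (A⁻¹ * Cov + c • (Cov⁻¹ * A⁻¹)) := by
    simp only [P, hθ1]
    exact ridge_normal_matrix_eq (isHermitian_iff_isSymm.mp hCov.posSemidef.isHermitian_sqrt)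
      (isHermitian_iff_isSymm.mp hA.isHermitian) (hCov.posSemidef.commute_sqrt_add_smul_one τ)
      hCov.posSemidef.sqrt_mul_self hCov.det_pos.ne'.isUnit c
  have hnormal : P *ᵥ βs = (θ1ᵀ * Cov) *ᵥ βstar := by
    rw [hβs, hPG]
    exact mul_mulVec_nonsing_inv_mulVec ((isUnit_iff_isUnit_det _).mp (hPG ▸ hP.isUnit)) _
  rw [hRbar, hRbar]
  linarith [hP.quadratic_lt_of_mulVec_eq hnormal hb]

/-- For a p×p positive definite covariance `Cov`, effective ridge `τ`,
effective sample size `n = tr((Cov + τI)⁻¹ Cov)` and `Ω = tr(Cov²(Cov+τI)⁻²)/n` with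
`0 < Ω < 1`, the vector
`βs = ((Cov + τI)⁻¹ Cov + (Ω τ²/(1−Ω)) Cov⁻¹ (Cov + τI)⁻¹)⁻¹ β*`
is the unique global minimizer of the asymptotic surrogate-to-target risk `Rbar`. -/
theorem optimal_surrogate_unique_minimizer
    (p : ℕ) (hp : 1 ≤ p)
    (Cov : Matrix (Fin p) (Fin p) ℝ) (hCov : Cov.PosDef)
    (τ : ℝ) (hτ : 0 < τ)
    (n Ω : ℝ)
    (hn : n = ((Cov + τ • (1 : Matrix (Fin p) (Fin p) ℝ))⁻¹ * Cov).trace)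
    (hΩ : Ω = (1 / n) * (Cov ^ 2 * ((Cov + τ • (1 : Matrix (Fin p) (Fin p) ℝ))⁻¹) ^ 2).trace)
    (hΩ0 : 0 < Ω) (hΩ1 : Ω < 1)
    (βstar : Fin p → ℝ) (σsq : ℝ) (hσ : 0 ≤ σsq)
    (θ1 : Matrix (Fin p) (Fin p) ℝ)
    (hθ1 : θ1 = (Cov + τ • (1 : Matrix (Fin p) (Fin p) ℝ))⁻¹ * Cov)
    (γsq : (Fin p → ℝ) → ℝ)
    (hγ : ∀ b : Fin p → ℝ, γsq b = ((p : ℝ) / n) * (σsq + τ ^ 2 *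
      ((((Cov + τ • (1 : Matrix (Fin p) (Fin p) ℝ))⁻¹ * hCov.posSemidef.sqrt).mulVec b) ⬝ᵥ
       (((Cov + τ • (1 : Matrix (Fin p) (Fin p) ℝ))⁻¹ * hCov.posSemidef.sqrt).mulVec b))) / (1 - Ω))
    (Rbar : (Fin p → ℝ) → ℝ)
    (hR : ∀ b : Fin p → ℝ, Rbar b =
      (θ1.mulVec (b - βstar)) ⬝ᵥ (Cov.mulVec (θ1.mulVec (b - βstar)))
      + γsq b * (Cov ^ 2 * ((Cov + τ • (1 : Matrix (Fin p) (Fin p) ℝ))⁻¹) ^ 2).trace / p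
      + ((1 - θ1).mulVec βstar) ⬝ᵥ (Cov.mulVec ((1 - θ1).mulVec βstar))
      - 2 * (((1 - θ1).mulVec βstar) ⬝ᵥ (Cov.mulVec (θ1.mulVec (b - βstar)))))
    (βs : Fin p → ℝ)
    (hβs : βs = (((Cov + τ • (1 : Matrix (Fin p) (Fin p) ℝ))⁻¹ * Cov
        + (Ω * τ ^ 2 / (1 - Ω)) • (Cov⁻¹ * (Cov + τ • (1 : Matrix (Fin p) (Fin p) ℝ))⁻¹))⁻¹).mulVec
        βstar) :
    ∀ b : Fin p → ℝ, b ≠ βs → Rbar βs < Rbar b :=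
  optimal_surrogate_unique_minimizer_general p hp Cov hCov τ hτ n Ω hΩ hΩ0 hΩ1 βstar σsq θ1 hθ1 γsq
    hγ Rbar hR βs hβs
end

section
/- Fix an integer p ≥ 1 and reals λ_1, …, λ_p > 0, a real τ > 0, and set n = Σ_{i=1}^p λ_i/(λ_i + τ), ζ_i = τ/(λ_i + τ) ∈ (0,1), and Ω = (1/n) Σ_{i=1}^p (1 − ζ_i)² = (Σ_{j=1}^p (1−ζ_j)²)/(Σ_{j=1}^p (1−ζ_j)), so that 0 < Ω < 1. Fix β* ∈ ℝ^p, and for each i define β^{s*}_i = β*_i · ((1 − ζ_i) + ζ_i · (Ω/(1 − Ω)) · (ζ_i/(1 − ζ_i)))^{-1}. Then for every i with β*_i ≠ 0: |β^{s*}_i| > |β*_i| if and only if 1 − ζ_i > Ω. -/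
/-- With `ζ i = τ/(lam i + τ)` and `Ω = (1/n) ∑ (1-ζ i)²`, the optimal
surrogate parameter `βs i = βstar i * ((1-ζ i) + ζ i (Ω/(1-Ω)) (ζ i/(1-ζ i)))⁻¹` satisfies,
for every `i` with `βstar i ≠ 0`: `|βs i| > |βstar i|` iff `1 - ζ i > Ω`. -/
theorem optimal_surrogate_amplification_iff
    (p : ℕ) (hp : 1 ≤ p)
    (lam : Fin p → ℝ) (hlam : ∀ i, 0 < lam i)
    (τ : ℝ) (hτ : 0 < τ)
    (n : ℝ) (hn : n = ∑ i, lam i / (lam i + τ))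
    (ζ : Fin p → ℝ) (hζ : ∀ i, ζ i = τ / (lam i + τ))
    (Ω : ℝ) (hΩ : Ω = (1 / n) * ∑ i, (1 - ζ i) ^ 2)
    (hΩ0 : 0 < Ω) (hΩ1 : Ω < 1)
    (βstar : Fin p → ℝ)
    (βs : Fin p → ℝ)
    (hβs : ∀ i, βs i =
      βstar i * ((1 - ζ i) + ζ i * (Ω / (1 - Ω)) * (ζ i / (1 - ζ i)))⁻¹) :
    ∀ i, βstar i ≠ 0 → (|βs i| > |βstar i| ↔ 1 - ζ i > Ω) := by
  intro i hi
  have hli := hlam i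
  have hden : 0 < lam i + τ := by linarith
  have hζ0 : 0 < ζ i := by rw [hζ]; positivity
  have hζ1 : ζ i < 1 := by
    rw [hζ, div_lt_one hden]; linarith
  have ha : 0 < 1 - ζ i := by linarith
  have hΩ' : 0 < 1 - Ω := by linarith
  set c : ℝ := (1 - ζ i) + ζ i * (Ω / (1 - Ω)) * (ζ i / (1 - ζ i)) with hc
  have hcpos : 0 < c := by
    rw [hc]
    have : 0 < ζ i * (Ω / (1 - Ω)) * (ζ i / (1 - ζ i)) := by positivity
    linarith
  have hkey : c = 1 + ζ i * (Ω - (1 - ζ i)) / ((1 - ζ i) * (1 - Ω)) := by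
    rw [hc]
    field_simp
    ring
  have hiff : c < 1 ↔ Ω < 1 - ζ i := by
    rw [hkey]
    have hD : 0 < (1 - ζ i) * (1 - Ω) := by positivity
    constructor
    · intro h
      by_contra hle
      push_neg at hle
      have : 0 ≤ ζ i * (Ω - (1 - ζ i)) / ((1 - ζ i) * (1 - Ω)) := by
        apply div_nonneg _ hD.le
        have : 0 ≤ Ω - (1 - ζ i) := by linarith
        positivity
      linarith
    · intro h
      have hnum : ζ i * (Ω - (1 - ζ i)) < 0 := by
        apply mul_neg_of_pos_of_neg hζ0; linarith
      have : ζ i * (Ω - (1 - ζ i)) / ((1 - ζ i) * (1 - Ω)) < 0 :=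
        div_neg_of_neg_of_pos hnum hD
      linarith
  rw [hβs i, abs_mul, abs_of_pos (inv_pos.mpr hcpos)]
  have hb : 0 < |βstar i| := abs_pos.mpr hi
  constructor
  · intro h
    have h1 : 1 < c⁻¹ := by
      by_contra hle
      push_neg at hle
      have : |βstar i| * c⁻¹ ≤ |βstar i| * 1 := by
        apply mul_le_mul_of_nonneg_left hle hb.le
      simp at this
      linarith
    have : c < 1 := by
      have := (one_lt_inv_iff₀).mp h1
      exact this.2
    exact hiff.mp this
  · intro h
    have hc1 : c < 1 := hiff.mpr h
    have h1 : 1 < c⁻¹ := (one_lt_inv_iff₀).mpr ⟨hcpos, hc1⟩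
    calc |βstar i| = |βstar i| * 1 := by ring
      _ < |βstar i| * c⁻¹ := by exact mul_lt_mul_of_pos_left h1 hb
end

section
/- Fix an integer p ≥ 1 and reals λ_1, …, λ_p > 0, a real τ > 0, and set n = Σ_{i=1}^p λ_i/(λ_i + τ), ζ_i = τ/(λ_i + τ) ∈ (0,1), and Ω = (1/n) Σ_{i=1}^p (1 − ζ_i)², so that 0 < Ω < 1. Fix β* ∈ ℝ^p with β*_i ≠ 0 for every i, and for each i define β^{s*}_i = β*_i · ((1 − ζ_i) + ζ_i · (Ω/(1 − Ω)) · (ζ_i/(1 − ζ_i)))^{-1}. Then β^{s*} = β* if and only if there exists c > 0 such that λ_i = c for all i (i.e., the covariance matrix is a multiple of the identity). -/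
/-! With `a = 1 - ζᵢ = λᵢ/(λᵢ+τ)` and `r = Ω/(1-Ω)`, the factor dividing `β*ᵢ` is
`a + r ζᵢ²/a`, which equals `1` exactly when `r ζᵢ = a`, i.e. when `λᵢ = τ r`. So `β^{s*} = β*`
says that every `λᵢ` equals the one number `τ r`; conversely, if all `λᵢ = c` then `Ω = c/(c+τ)`
and `τ r = c`. -/

open Finset

lemma one_sub_add_mul_div_one_sub_eq_one_iff {z r : ℝ} (hz₀ : z ≠ 0) (hz₁ : z ≠ 1) :
    (1 - z) + z * r * (z / (1 - z)) = 1 ↔ r * z = 1 - z := by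
  have h : 1 - z ≠ 0 := sub_ne_zero.mpr (Ne.symm hz₁)
  rw [← eq_sub_iff_add_eq', sub_sub_cancel, mul_div_assoc', div_eq_iff h, mul_assoc,
    mul_right_inj' hz₀]

lemma mul_div_add_eq_one_sub_iff {lam τ r : ℝ} (hlτ : lam + τ ≠ 0) :
    r * (τ / (lam + τ)) = 1 - τ / (lam + τ) ↔ lam = τ * r := by
  rw [one_sub_div hlτ, add_sub_cancel_right, mul_div_assoc', div_left_inj' hlτ, mul_comm, eq_comm]

lemma one_div_sum_const_mul_sum_sq {ι : Type*} [Fintype ι] [Nonempty ι] {a : ℝ} (ha : a ≠ 0) :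
    (1 / ∑ _i : ι, a) * ∑ _i : ι, a ^ 2 = a := by
  have : (Fintype.card ι : ℝ) ≠ 0 := Nat.cast_ne_zero.mpr Fintype.card_ne_zero
  simp only [sum_const, card_univ, nsmul_eq_mul]
  field_simp

lemma mul_div_one_sub_div_add {c τ : ℝ} (hτ : τ ≠ 0) (hcτ : c + τ ≠ 0) :
    τ * (c / (c + τ) / (1 - c / (c + τ))) = c := by
  rw [one_sub_div hcτ, add_sub_cancel_left, div_div_div_cancel_right₀ hcτ]
  field_simp

/-- With `ζ i = τ/(lam i + τ)` and `Ω = (1/n) ∑ (1-ζ i)²`, and ground truth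
`βstar` with all coordinates nonzero, the optimal surrogate `βs` equals `βstar` iff the
covariance is a multiple of the identity, i.e. all eigenvalues `lam i` are equal to some `c > 0`. -/
theorem optimal_surrogate_eq_iff_isotropic
    (p : ℕ) (hp : 1 ≤ p)
    (lam : Fin p → ℝ) (hlam : ∀ i, 0 < lam i)
    (τ : ℝ) (hτ : 0 < τ)
    (n : ℝ) (hn : n = ∑ i, lam i / (lam i + τ))
    (ζ : Fin p → ℝ) (hζ : ∀ i, ζ i = τ / (lam i + τ))
    (Ω : ℝ) (hΩ : Ω = (1 / n) * ∑ i, (1 - ζ i) ^ 2)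
    (hΩ0 : 0 < Ω) (hΩ1 : Ω < 1)
    (βstar : Fin p → ℝ) (hβstar : ∀ i, βstar i ≠ 0)
    (βs : Fin p → ℝ)
    (hβs : ∀ i, βs i =
      βstar i * ((1 - ζ i) + ζ i * (Ω / (1 - Ω)) * (ζ i / (1 - ζ i)))⁻¹) :
    βs = βstar ↔ ∃ c : ℝ, 0 < c ∧ ∀ i, lam i = c := by
  have hlτ i : 0 < lam i + τ := add_pos (hlam i) hτ
  have hcoord i : βs i = βstar i ↔ lam i = τ * (Ω / (1 - Ω)) := by
    have hζ₀ : ζ i ≠ 0 := hζ i ▸ (div_pos hτ (hlτ i)).ne'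
    have hζ₁ : ζ i < 1 := by rw [hζ i, div_lt_one (hlτ i)]; linarith [hlam i]
    rw [hβs i, mul_eq_left₀ (hβstar i), inv_eq_one,
      one_sub_add_mul_div_one_sub_eq_one_iff hζ₀ hζ₁.ne, hζ i,
      mul_div_add_eq_one_sub_iff (hlτ i).ne']
  simp only [funext_iff, hcoord]
  constructor
  · exact fun h => ⟨τ * (Ω / (1 - Ω)), mul_pos hτ (div_pos hΩ0 (sub_pos.mpr hΩ1)), h⟩
  · rintro ⟨c, hc, hlam_eq⟩ i
    have : Nonempty (Fin p) := ⟨⟨0, hp⟩⟩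
    have hcτ : c + τ ≠ 0 := hlam_eq i ▸ (hlτ i).ne'
    have hΩ_eq : Ω = c / (c + τ) := by
      simp only [hΩ, hn, hζ, hlam_eq, one_sub_div hcτ, add_sub_cancel_right]
      exact one_div_sum_const_mul_sum_sq (div_ne_zero hc.ne' hcτ)
    rw [hlam_eq, hΩ_eq, mul_div_one_sub_div_add hτ.ne' hcτ]
end

section
/- Fix an integer p ≥ 1 and reals λ_1, …, λ_p > 0, a real τ > 0, and set n = Σ_{i=1}^p λ_i/(λ_i + τ), ζ_i = τ/(λ_i + τ), Ω = (1/n) Σ_{i=1}^p (1 − ζ_i)², and Σ = diag(λ_1,…,λ_p). Fix β* ∈ ℝ^p, σ² ≥ 0, set B = Σ_{i=1}^p λ_i ζ_i² (β*_i)², and let γ² = (p/n)(σ² + B)/(1 − Ω). Let g be a standard Gaussian random vector on ℝ^p (the product of p independent standard normal distributions). Then the expectation over g of ‖Σ^{1/2}((Σ + τ I)^{-1} Σ (β* + Σ^{-1/2} (γ/√p) g) − β*)‖² equals B + γ² · tr(Σ²(Σ + τ I)^{-2})/p, which equals (σ² Ω + B)/(1 − Ω). -/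
/-!
Under the product Gaussian each summand of the risk is the square of an affine function
`a i + b i * g i` of one standard normal coordinate, so its mean is `a i ^ 2 + b i ^ 2`.
The `a i ^ 2 = λᵢ ζᵢ² β*ᵢ²` sum to the bias `B`, and the `b i ^ 2 = cᵢ² γ² / p`, with
`cᵢ = λᵢ / (λᵢ + τ) = 1 - ζᵢ`, to the variance term. As `∑ cᵢ² = Ω n`, the choice of `γ` makes
that term `Ω (σ² + B) / (1 - Ω)`; this needs `Ω < 1`, which holds because `0 < cᵢ < 1` gives
`∑ cᵢ² < ∑ cᵢ = n`.
-/

open MeasureTheory ProbabilityTheory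
open scoped NNReal

namespace ProbabilityTheory

variable {μ : ℝ} {v : ℝ≥0}

lemma integral_sq_gaussianReal : ∫ x, x ^ 2 ∂gaussianReal μ v = μ ^ 2 + v := by
  have h := variance_eq_sub (memLp_id_gaussianReal (μ := μ) (v := v) 2)
  simp only [variance_id_gaussianReal, Pi.pow_apply, id, integral_id_gaussianReal] at h
  linarith

lemma integrable_sq_const_add_mul_gaussianReal (a b : ℝ) :
    Integrable (fun x ↦ (a + b * x) ^ 2) (gaussianReal μ v) :=
  ((memLp_const a).add ((memLp_id_gaussianReal 2).const_mul b)).integrable_sq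

lemma integral_sq_const_add_mul_gaussianReal (a b : ℝ) :
    ∫ x, (a + b * x) ^ 2 ∂gaussianReal μ v = (a + b * μ) ^ 2 + b ^ 2 * v := by
  have hlaw :=
    gaussianReal_const_add (gaussianReal_const_mul (HasLaw.id (μ := gaussianReal μ v)) b) a
  have h := hlaw.integral_comp (f := fun y : ℝ ↦ y ^ 2) (by fun_prop)
  simp only [Function.comp_def, id] at h
  rw [h, integral_sq_gaussianReal]
  push_cast
  ring

lemma integral_sum_sq_const_add_mul_pi_gaussianReal {ι : Type*} [Fintype ι]
    (μ : ι → ℝ) (v : ι → ℝ≥0) (a b : ι → ℝ) :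
    ∫ g : ι → ℝ, ∑ i, (a i + b i * g i) ^ 2
        ∂Measure.pi (fun i ↦ gaussianReal (μ i) (v i))
      = ∑ i, ((a i + b i * μ i) ^ 2 + b i ^ 2 * v i) := by
  have hint (i : ι) : Integrable (fun g : ι → ℝ ↦ (a i + b i * g i) ^ 2)
      (Measure.pi fun i ↦ gaussianReal (μ i) (v i)) :=
    integrable_comp_eval (X := fun _ ↦ ℝ) (f := fun x ↦ (a i + b i * x) ^ 2)
      (integrable_sq_const_add_mul_gaussianReal (a i) (b i))
  rw [integral_finsetSum _ fun i _ ↦ hint i]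
  refine Finset.sum_congr rfl fun i _ ↦ ?_
  rw [integral_comp_eval (X := fun _ ↦ ℝ) (f := fun x ↦ (a i + b i * x) ^ 2) (by fun_prop),
    integral_sq_const_add_mul_gaussianReal]

end ProbabilityTheory

lemma Finset.sum_sq_lt_sum {ι R : Type*} [Semiring R] [PartialOrder R] [IsStrictOrderedRing R]
    {s : Finset ι} (hs : s.Nonempty) {c : ι → R}
    (h0 : ∀ i ∈ s, 0 < c i) (h1 : ∀ i ∈ s, c i < 1) :
    ∑ i ∈ s, c i ^ 2 < ∑ i ∈ s, c i :=
  Finset.sum_lt_sum_of_nonempty hs fun i hi ↦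
    pow_lt_self_of_lt_one₀ (h0 i hi) (h1 i hi) one_lt_two

lemma sqrt_mul_sub_eq_const_add_mul {l : ℝ} (hl : 0 < l) (c β s x : ℝ) :
    √l * (c * (β + (√l)⁻¹ * s * x) - β) = √l * (c - 1) * β + c * s * x := by
  have : √l ≠ 0 := (Real.sqrt_pos.mpr hl).ne'
  field_simp
  ring

theorem omniscient_risk_gaussian_average_general
    (p : ℕ) (hp : 1 ≤ p)
    (lam : Fin p → ℝ) (hlam : ∀ i, 0 < lam i)
    (τ : ℝ) (hτ : 0 < τ)
    (n : ℝ) (hn : n = ∑ i, lam i / (lam i + τ))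
    (ζ : Fin p → ℝ) (hζ : ∀ i, ζ i = τ / (lam i + τ))
    (Ω : ℝ) (hΩ : Ω = (1 / n) * ∑ i, (1 - ζ i) ^ 2)
    (βstar : Fin p → ℝ) (σsq : ℝ)
    (B : ℝ) (hB : B = ∑ i, lam i * ζ i ^ 2 * βstar i ^ 2)
    (γ : ℝ) (hγ : γ ^ 2 = ((p : ℝ) / n) * (σsq + B) / (1 - Ω)) :
    (∫ g : Fin p → ℝ,
        ∑ i, (Real.sqrt (lam i) *
          ((lam i / (lam i + τ)) *
              (βstar i + (Real.sqrt (lam i))⁻¹ * (γ / Real.sqrt p) * g i)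
            - βstar i)) ^ 2
      ∂(Measure.pi fun _ : Fin p => gaussianReal 0 1))
      = B + γ ^ 2 * (∑ i, (lam i / (lam i + τ)) ^ 2) / p
    ∧ B + γ ^ 2 * (∑ i, (lam i / (lam i + τ)) ^ 2) / p = (σsq * Ω + B) / (1 - Ω) := by
  have hlτ (i : Fin p) : 0 < lam i + τ := add_pos (hlam i) hτ
  have hζc (i : Fin p) : ζ i = 1 - lam i / (lam i + τ) := by
    rw [hζ, eq_sub_iff_add_eq, ← add_div, add_comm, div_self (hlτ i).ne']
  have hc0 (i : Fin p) : 0 < lam i / (lam i + τ) := div_pos (hlam i) (hlτ i)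
  have hc1 (i : Fin p) : lam i / (lam i + τ) < 1 :=
    (div_lt_one (hlτ i)).mpr (lt_add_of_pos_right _ hτ)
  have hne : (Finset.univ : Finset (Fin p)).Nonempty := ⟨⟨0, hp⟩, Finset.mem_univ _⟩
  have hn0 : 0 < n := hn ▸ Finset.sum_pos (fun i _ ↦ hc0 i) hne
  have hΩn : ∑ i, (lam i / (lam i + τ)) ^ 2 = Ω * n := by
    simp only [hΩ, hζc, sub_sub_cancel]
    field_simp
  have hΩ1 : Ω < 1 := by
    have h := Finset.sum_sq_lt_sum hne (fun i _ ↦ hc0 i) (fun i _ ↦ hc1 i)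
    rwa [hΩn, ← hn, mul_lt_iff_lt_one_left hn0] at h
  refine ⟨?_, ?_⟩
  · simp_rw [sqrt_mul_sub_eq_const_add_mul (hlam _), integral_sum_sq_const_add_mul_pi_gaussianReal,
      mul_zero, add_zero, NNReal.coe_one, mul_one]
    rw [Finset.sum_add_distrib, hB, Finset.mul_sum, Finset.sum_div]
    congr 1 <;> refine Finset.sum_congr rfl fun i _ ↦ ?_
    · rw [mul_pow, mul_pow, Real.sq_sqrt (hlam i).le, hζc]
      ring
    · rw [mul_pow, div_pow γ, Real.sq_sqrt p.cast_nonneg]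
      ring
  · have hp0 : (p : ℝ) ≠ 0 := by positivity
    rw [hΩn, hγ]
    field_simp [(sub_pos.mpr hΩ1).ne']
    ring

/-- Gaussian-average characterization of the omniscient excess test risk
for a diagonal covariance: the expectation over a standard Gaussian `g` of
`‖Σ^{1/2}((Σ+τI)⁻¹Σ(β* + Σ^{-1/2}(γ/√p)g) − β*)‖²` equals
`B + γ² tr(Σ²(Σ+τI)⁻²)/p = (σ²Ω + B)/(1−Ω)`. -/
theorem omniscient_risk_gaussian_average
    (p : ℕ) (hp : 1 ≤ p)
    (lam : Fin p → ℝ) (hlam : ∀ i, 0 < lam i)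
    (τ : ℝ) (hτ : 0 < τ)
    (n : ℝ) (hn : n = ∑ i, lam i / (lam i + τ))
    (ζ : Fin p → ℝ) (hζ : ∀ i, ζ i = τ / (lam i + τ))
    (Ω : ℝ) (hΩ : Ω = (1 / n) * ∑ i, (1 - ζ i) ^ 2)
    (βstar : Fin p → ℝ) (σsq : ℝ) (hσ : 0 ≤ σsq)
    (B : ℝ) (hB : B = ∑ i, lam i * ζ i ^ 2 * βstar i ^ 2)
    (γ : ℝ) (hγ0 : 0 ≤ γ) (hγ : γ ^ 2 = ((p : ℝ) / n) * (σsq + B) / (1 - Ω)) :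
    (∫ g : Fin p → ℝ,
        ∑ i, (Real.sqrt (lam i) *
          ((lam i / (lam i + τ)) *
              (βstar i + (Real.sqrt (lam i))⁻¹ * (γ / Real.sqrt p) * g i)
            - βstar i)) ^ 2
      ∂(Measure.pi fun _ : Fin p => gaussianReal 0 1))
      = B + γ ^ 2 * (∑ i, (lam i / (lam i + τ)) ^ 2) / p
    ∧ B + γ ^ 2 * (∑ i, (lam i / (lam i + τ)) ^ 2) / p = (σsq * Ω + B) / (1 - Ω) :=
  omniscient_risk_gaussian_average_general p hp lam hlam τ hτ n hn ζ hζ Ω hΩ βstar σsq B hB γ hγ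
end

section
/- Fix an integer p ≥ 1 and reals λ_1, …, λ_p > 0, a real τ > 0, and set n = Σ_{i=1}^p λ_i/(λ_i + τ), ζ_i = τ/(λ_i + τ) ∈ (0,1), and Ω = (1/n) Σ_{i=1}^p (1 − ζ_i)², so that 0 < Ω < 1. Fix β* ∈ ℝ^p and σ² ≥ 0, and for a subset S ⊆ {1,…,p} define the masked surrogate-to-target risk R_M(S) = (σ² Ω + Σ_{i∈S} λ_i (β*_i)² ζ_i²)/(1 − Ω) + Σ_{i∉S} λ_i (β*_i)². Let S* = { i : ζ_i² < 1 − Ω }. Then R_M(S*) ≤ R_M({1,…,p}), i.e., the masked surrogate-to-target model with mask S* has risk at most that of the standard target model. -/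
/-- The masked surrogate-to-target model with the mask
`S* = {i : ζ i² < 1 - Ω}` has asymptotic risk at most that of the standard target model
(which corresponds to the full mask `univ`). -/
theorem masked_surrogate_beats_target
    (p : ℕ) (hp : 1 ≤ p)
    (lam : Fin p → ℝ) (hlam : ∀ i, 0 < lam i)
    (τ : ℝ) (hτ : 0 < τ)
    (n : ℝ) (hn : n = ∑ i, lam i / (lam i + τ))
    (ζ : Fin p → ℝ) (hζ : ∀ i, ζ i = τ / (lam i + τ))
    (Ω : ℝ) (hΩ : Ω = (1 / n) * ∑ i, (1 - ζ i) ^ 2)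
    (hΩ0 : 0 < Ω) (hΩ1 : Ω < 1)
    (βstar : Fin p → ℝ) (σsq : ℝ) (hσ : 0 ≤ σsq)
    (RM : Finset (Fin p) → ℝ)
    (hRM : ∀ S : Finset (Fin p),
      RM S = (σsq * Ω + ∑ i ∈ S, lam i * βstar i ^ 2 * ζ i ^ 2) / (1 - Ω)
        + ∑ i ∈ Sᶜ, lam i * βstar i ^ 2) :
    RM (Finset.univ.filter fun i => ζ i ^ 2 < 1 - Ω) ≤ RM Finset.univ := by
  have hc : 0 < 1 - Ω := by linarith
  set S := Finset.univ.filter fun i => ζ i ^ 2 < 1 - Ω with hS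
  rw [hRM, hRM]
  simp only [Finset.compl_univ, Finset.sum_empty, add_zero]
  rw [← Finset.sum_add_sum_compl S (fun i => lam i * βstar i ^ 2 * ζ i ^ 2)]
  have hsplit : (σsq * Ω + ((∑ i ∈ S, lam i * βstar i ^ 2 * ζ i ^ 2)
      + ∑ i ∈ Sᶜ, lam i * βstar i ^ 2 * ζ i ^ 2)) / (1 - Ω)
      = (σsq * Ω + ∑ i ∈ S, lam i * βstar i ^ 2 * ζ i ^ 2) / (1 - Ω)
        + (∑ i ∈ Sᶜ, lam i * βstar i ^ 2 * ζ i ^ 2) / (1 - Ω) := by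
    rw [← add_assoc, add_div]
  rw [hsplit]
  gcongr
  rw [Finset.sum_div]
  apply Finset.sum_le_sum
  intro i hi
  have hmem : ¬ (ζ i ^ 2 < 1 - Ω) := by
    simp [hS, Finset.mem_compl] at hi
    simpa using hi
  have hge : 1 - Ω ≤ ζ i ^ 2 := not_lt.mp hmem
  rw [le_div_iff₀ hc]
  have h0 : 0 ≤ lam i * βstar i ^ 2 := mul_nonneg (hlam i).le (sq_nonneg _)
  nlinarith [mul_le_mul_of_nonneg_left hge h0]
end

section
/- Fix an integer p ≥ 1 and reals λ_1, …, λ_p > 0, a real τ > 0, and set n = Σ_{i=1}^p λ_i/(λ_i + τ), ζ_i = τ/(λ_i + τ) ∈ (0,1), and Ω = (1/n) Σ_{i=1}^p (1 − ζ_i)², so that 0 < Ω < 1. Fix β* ∈ ℝ^p and σ² ≥ 0, and for a subset S ⊆ {1,…,p} define R_M(S) = (σ² Ω + Σ_{i∈S} λ_i (β*_i)² ζ_i²)/(1 − Ω) + Σ_{i∉S} λ_i (β*_i)². Let S* = { i : ζ_i² < 1 − Ω }. Then for every subset S ⊆ {1,…,p}, R_M(S*) ≤ R_M(S); that is, S*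 minimizes the masked surrogate-to-target risk over all 2^p subsets. -/
/-- The mask `S* = {i : ζ i² < 1 - Ω}` minimizes the masked
surrogate-to-target risk over all `2^p` subsets of features. -/
theorem optimal_mask_minimizes_risk
    (p : ℕ) (hp : 1 ≤ p)
    (lam : Fin p → ℝ) (hlam : ∀ i, 0 < lam i)
    (τ : ℝ) (hτ : 0 < τ)
    (n : ℝ) (hn : n = ∑ i, lam i / (lam i + τ))
    (ζ : Fin p → ℝ) (hζ : ∀ i, ζ i = τ / (lam i + τ))
    (Ω : ℝ) (hΩ : Ω = (1 / n) * ∑ i, (1 - ζ i) ^ 2)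
    (hΩ0 : 0 < Ω) (hΩ1 : Ω < 1)
    (βstar : Fin p → ℝ) (σsq : ℝ) (hσ : 0 ≤ σsq)
    (RM : Finset (Fin p) → ℝ)
    (hRM : ∀ S : Finset (Fin p),
      RM S = (σsq * Ω + ∑ i ∈ S, lam i * βstar i ^ 2 * ζ i ^ 2) / (1 - Ω)
        + ∑ i ∈ Sᶜ, lam i * βstar i ^ 2) :
    ∀ S : Finset (Fin p),
      RM (Finset.univ.filter fun i => ζ i ^ 2 < 1 - Ω) ≤ RM S := by
  intro S
  have h1 : (0:ℝ) < 1 - Ω := by linarith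
  set a : Fin p → ℝ := fun i => lam i * βstar i ^ 2 with ha
  have ha0 : ∀ i, 0 ≤ a i := fun i => mul_nonneg (hlam i).le (sq_nonneg _)
  -- rewrite RM T as a constant plus a sum over univ
  have key : ∀ T : Finset (Fin p),
      RM T = σsq * Ω / (1 - Ω)
        + ∑ i, (if i ∈ T then a i * ζ i ^ 2 / (1 - Ω) else a i) := by
    intro T
    have hsplit : (∑ i, (if i ∈ T then a i * ζ i ^ 2 / (1 - Ω) else a i))
        = (∑ i ∈ T, a i * ζ i ^ 2 / (1 - Ω)) + ∑ i ∈ Tᶜ, a i := by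
      rw [Finset.sum_ite]
      congr 1
      · congr 1; ext i; simp
      · congr 1; ext i; simp
    rw [hRM T, hsplit, add_div, Finset.sum_div]
    have : ∀ x ∈ T, a x * ζ x ^ 2 / (1 - Ω) = lam x * βstar x ^ 2 * ζ x ^ 2 / (1 - Ω) := by
      intro x _; simp [ha]
    rw [Finset.sum_congr rfl this]
    ring
  rw [key, key]
  gcongr with i _
  by_cases hi : ζ i ^ 2 < 1 - Ω
  · simp only [Finset.mem_filter, Finset.mem_univ, true_and, hi, if_true]
    by_cases hiS : i ∈ S
    · simp [hiS]
    · simp only [hiS, if_false]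
      rw [div_le_iff₀ h1]
      nlinarith [ha0 i, sq_nonneg (ζ i)]
  · simp only [Finset.mem_filter, Finset.mem_univ, true_and, hi, if_false]
    by_cases hiS : i ∈ S
    · simp only [hiS, if_true]
      rw [le_div_iff₀ h1]
      nlinarith [ha0 i]
    · simp [hiS]
end

section
/- For every real α > 1 and every real τ > 0, the improper integral ∫_0^∞ (x^{-α}/(x^{-α} + τ))² dx (equivalently ∫_0^∞ 1/(1 + τ x^{α})² dx) converges and equals (π(α − 1)/(α² sin(π/α))) · τ^{-1/α}. -/
/-!
Scaling `x ↦ τ^(-1/α) x` and the substitution `u = x^α` turn the integral into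
`τ^(-1/α) / α · ∫_0^∞ u^(1/α - 1) (1 + u)^(-2) du`, and `u = t / (1 - t)` turns this beta-prime
integral into Euler's `B(1/α, 2 - 1/α) = Γ(1/α) Γ(2 - 1/α)`. The reflection formula
`Γ(s) Γ(1 - s) = π / sin(π s)` evaluates it to `(1 - 1/α) π / sin(π/α)`.
-/

open MeasureTheory Real Set

lemma ofReal_rpow_mul_one_sub_rpow {t : ℝ} (ht : t ∈ Ioo 0 1) (u v : ℝ) :
    ((t ^ (u - 1) * (1 - t) ^ (v - 1) : ℝ) : ℂ) =
      (t : ℂ) ^ ((u : ℂ) - 1) * (1 - (t : ℂ)) ^ ((v : ℂ) - 1) := by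
  rw [Complex.ofReal_mul, Complex.ofReal_cpow ht.1.le, Complex.ofReal_cpow (sub_nonneg.2 ht.2.le)]
  push_cast
  rfl

lemma integrableOn_Ioo_rpow_mul_one_sub_rpow {u v : ℝ} (hu : 0 < u) (hv : 0 < v) :
    IntegrableOn (fun t : ℝ ↦ t ^ (u - 1) * (1 - t) ^ (v - 1)) (Ioo 0 1) := by
  have h := (Complex.betaIntegral_convergent (u := u) (v := v) (by simpa) (by simpa)).1
  have h_re : IntegrableOn
      (fun t : ℝ ↦ ((t : ℂ) ^ ((u : ℂ) - 1) * (1 - (t : ℂ)) ^ ((v : ℂ) - 1)).re) (Ioc 0 1) :=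
    h.re
  refine (h_re.mono_set Ioo_subset_Ioc_self).congr_fun (fun t ht ↦ ?_) measurableSet_Ioo
  simp only [← ofReal_rpow_mul_one_sub_rpow ht, Complex.ofReal_re]

lemma integral_Ioo_rpow_mul_one_sub_rpow {u v : ℝ} (hu : 0 < u) (hv : 0 < v) :
    ∫ t in Ioo 0 1, t ^ (u - 1) * (1 - t) ^ (v - 1) = Gamma u * Gamma v / Gamma (u + v) := by
  have h := Complex.betaIntegral_eq_Gamma_mul_div u v (by simpa) (by simpa)
  rw [Complex.betaIntegral, intervalIntegral.integral_of_le zero_le_one,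
    integral_Ioc_eq_integral_Ioo, ← setIntegral_congr_fun measurableSet_Ioo
      (fun t ht ↦ ofReal_rpow_mul_one_sub_rpow ht u v), integral_complex_ofReal,
    ← Complex.ofReal_add, Complex.Gamma_ofReal, Complex.Gamma_ofReal, Complex.Gamma_ofReal] at h
  exact_mod_cast h

lemma hasDerivAt_div_one_sub {t : ℝ} (ht : t ≠ 1) :
    HasDerivAt (fun t : ℝ ↦ t / (1 - t)) ((1 - t) ^ 2)⁻¹ t := by
  have h := (hasDerivAt_id t).div ((hasDerivAt_id t).const_sub 1) (sub_ne_zero.2 ht.symm)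
  refine h.congr_deriv ?_
  simp only [id]
  field_simp
  ring

lemma injOn_div_one_sub : InjOn (fun t : ℝ ↦ t / (1 - t)) (Ioo 0 1) := by
  intro s hs t ht h
  have hs1 : 1 - s ≠ 0 := by linarith [hs.2]
  have ht1 : 1 - t ≠ 0 := by linarith [ht.2]
  field_simp at h
  linarith

lemma image_div_one_sub_Ioo : (fun t : ℝ ↦ t / (1 - t)) '' Ioo 0 1 = Ioi 0 := by
  ext u
  constructor
  · rintro ⟨t, ht, rfl⟩
    exact div_pos ht.1 (sub_pos.2 ht.2)
  · intro (hu : 0 < u)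
    refine ⟨u / (1 + u), ⟨by positivity, (div_lt_one (by positivity)).2 (by linarith)⟩, ?_⟩
    field_simp
    simp

lemma abs_deriv_smul_comp_div_one_sub {p q t : ℝ} (ht : t ∈ Ioo 0 1) :
    |((1 - t) ^ 2)⁻¹| • ((t / (1 - t)) ^ (p - 1) * (1 + t / (1 - t)) ^ (-(p + q))) =
      t ^ (p - 1) * (1 - t) ^ (q - 1) := by
  have h1t : 0 < 1 - t := sub_pos.2 ht.2
  have h_add : 1 + t / (1 - t) = (1 - t)⁻¹ := by field_simp; ring
  have h_exp : (1 - t) ^ (q - 1) * ((1 - t) ^ (p - 1) * (1 - t) ^ 2) = (1 - t) ^ (p + q) := by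
    rw [← rpow_two, ← rpow_add h1t, ← rpow_add h1t]
    ring_nf
  rw [smul_eq_mul, abs_of_pos (by positivity), h_add, inv_rpow h1t.le, rpow_neg h1t.le, inv_inv,
    div_rpow ht.1.le h1t.le, ← h_exp]
  have : (1 - t) ^ (p - 1) ≠ 0 := (rpow_pos_of_pos h1t _).ne'
  field_simp

theorem integrableOn_Ioi_rpow_mul_one_add_rpow_neg {p q : ℝ} (hp : 0 < p) (hq : 0 < q) :
    IntegrableOn (fun u : ℝ ↦ u ^ (p - 1) * (1 + u) ^ (-(p + q))) (Ioi 0) := by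
  rw [← image_div_one_sub_Ioo, integrableOn_image_iff_integrableOn_abs_deriv_smul
    measurableSet_Ioo (fun t ht ↦ (hasDerivAt_div_one_sub ht.2.ne).hasDerivWithinAt)
    injOn_div_one_sub]
  exact (integrableOn_Ioo_rpow_mul_one_sub_rpow hp hq).congr_fun
    (fun t ht ↦ (abs_deriv_smul_comp_div_one_sub ht).symm) measurableSet_Ioo

theorem integral_Ioi_rpow_mul_one_add_rpow_neg {p q : ℝ} (hp : 0 < p) (hq : 0 < q) :
    ∫ u in Ioi 0, u ^ (p - 1) * (1 + u) ^ (-(p + q)) = Gamma p * Gamma q / Gamma (p + q) := by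
  rw [← image_div_one_sub_Ioo, integral_image_eq_integral_abs_deriv_smul
    measurableSet_Ioo (fun t ht ↦ (hasDerivAt_div_one_sub ht.2.ne).hasDerivWithinAt)
    injOn_div_one_sub, setIntegral_congr_fun measurableSet_Ioo
    (fun t ht ↦ abs_deriv_smul_comp_div_one_sub ht), integral_Ioo_rpow_mul_one_sub_rpow hp hq]

-- The exponent is split as `p + q` to match `integral_Ioi_rpow_mul_one_add_rpow_neg`.
lemma one_add_rpow_inv_rpow {a u : ℝ} (ha : a ≠ 0) (hu : 0 < u) (r : ℝ) :
    (1 + (u ^ a⁻¹) ^ a) ^ (-r) = (1 + u) ^ (-(a⁻¹ + (r - a⁻¹))) := by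
  rw [← rpow_mul hu.le, inv_mul_cancel₀ ha, rpow_one, add_sub_cancel]

theorem integrableOn_Ioi_one_add_rpow_rpow_neg {a r : ℝ} (ha : 0 < a) (hr : a⁻¹ < r) :
    IntegrableOn (fun x : ℝ ↦ (1 + x ^ a) ^ (-r)) (Ioi 0) := by
  rw [← integrableOn_Ioi_comp_rpow_iff' _ (inv_ne_zero ha.ne')]
  refine (integrableOn_Ioi_rpow_mul_one_add_rpow_neg (inv_pos.2 ha) (sub_pos.2 hr)).congr_fun
    (fun u hu ↦ ?_) measurableSet_Ioi
  rw [smul_eq_mul, one_add_rpow_inv_rpow ha.ne' hu]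

theorem integral_Ioi_one_add_rpow_rpow_neg {a r : ℝ} (ha : 0 < a) (hr : a⁻¹ < r) :
    ∫ x in Ioi 0, (1 + x ^ a) ^ (-r) = Gamma a⁻¹ * Gamma (r - a⁻¹) / Gamma r / a := by
  rw [← integral_comp_rpow_Ioi_of_pos (inv_pos.2 ha), setIntegral_congr_fun measurableSet_Ioi
    (fun u hu ↦ by rw [smul_eq_mul, one_add_rpow_inv_rpow ha.ne' hu, mul_assoc]),
    integral_const_mul, integral_Ioi_rpow_mul_one_add_rpow_neg (inv_pos.2 ha) (sub_pos.2 hr),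
    add_sub_cancel]
  ring

lemma mul_rpow_eq_rpow_inv_mul_rpow {a b x : ℝ} (ha : a ≠ 0) (hb : 0 < b) (hx : 0 < x) :
    b * x ^ a = (b ^ a⁻¹ * x) ^ a := by
  rw [mul_rpow (by positivity) hx.le, ← rpow_mul hb.le, inv_mul_cancel₀ ha, rpow_one]

theorem integrableOn_Ioi_one_add_mul_rpow_rpow_neg {a b r : ℝ} (ha : 0 < a) (hb : 0 < b)
    (hr : a⁻¹ < r) : IntegrableOn (fun x : ℝ ↦ (1 + b * x ^ a) ^ (-r)) (Ioi 0) := by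
  have h := (integrableOn_Ioi_comp_mul_left_iff (fun y : ℝ ↦ (1 + y ^ a) ^ (-r)) 0
    (rpow_pos_of_pos hb a⁻¹)).2 (by simpa using integrableOn_Ioi_one_add_rpow_rpow_neg ha hr)
  exact h.congr_fun (fun x hx ↦ by rw [mul_rpow_eq_rpow_inv_mul_rpow ha.ne' hb hx])
    measurableSet_Ioi

theorem integral_Ioi_one_add_mul_rpow_rpow_neg {a b r : ℝ} (ha : 0 < a) (hb : 0 < b)
    (hr : a⁻¹ < r) :
    ∫ x in Ioi 0, (1 + b * x ^ a) ^ (-r) =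
      b ^ (-a⁻¹) * (Gamma a⁻¹ * Gamma (r - a⁻¹) / Gamma r / a) := by
  rw [setIntegral_congr_fun measurableSet_Ioi
      (fun x hx ↦ by rw [mul_rpow_eq_rpow_inv_mul_rpow ha.ne' hb hx]),
    integral_comp_mul_left_Ioi (fun y : ℝ ↦ (1 + y ^ a) ^ (-r)) 0 (rpow_pos_of_pos hb a⁻¹),
    mul_zero, integral_Ioi_one_add_rpow_rpow_neg ha hr, smul_eq_mul, rpow_neg hb.le]

lemma Gamma_mul_Gamma_two_sub {s : ℝ} (hs : s ≠ 1) :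
    Gamma s * Gamma (2 - s) = (1 - s) * (π / sin (π * s)) := by
  rw [show 2 - s = (1 - s) + 1 by ring, Gamma_add_one (sub_ne_zero.2 hs.symm),
    ← Gamma_mul_Gamma_one_sub]
  ring

lemma rpow_neg_div_rpow_neg_add_sq {x τ : ℝ} (hx : 0 < x) (hτ : 0 ≤ τ) (α : ℝ) :
    (x ^ (-α) / (x ^ (-α) + τ)) ^ 2 = (1 + τ * x ^ α) ^ (-2 : ℝ) := by
  have hxα : 0 < x ^ α := rpow_pos_of_pos hx α
  rw [rpow_neg hx.le, rpow_neg (by positivity), rpow_two]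
  field_simp

/-- For `α > 1` and `τ > 0`, the integral
`∫_0^∞ (x^{-α}/(x^{-α} + τ))² dx` converges and equals `(π(α-1)/(α² sin(π/α))) τ^{-1/α}`. -/
theorem integral_power_law_resolvent_sq
    (α τ : ℝ) (hα : 1 < α) (hτ : 0 < τ) :
    MeasureTheory.IntegrableOn (fun x : ℝ => (x ^ (-α) / (x ^ (-α) + τ)) ^ 2) (Set.Ioi 0) ∧
    ∫ x in Set.Ioi (0 : ℝ), (x ^ (-α) / (x ^ (-α) + τ)) ^ 2
      = (Real.pi * (α - 1) / (α ^ 2 * Real.sin (Real.pi / α))) * τ ^ (-1 / α) := by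
  have hα₀ : 0 < α := by linarith
  have hα_inv : α⁻¹ < 2 := by linarith [inv_lt_one_of_one_lt₀ hα]
  have h_eq : EqOn (fun x : ℝ ↦ (x ^ (-α) / (x ^ (-α) + τ)) ^ 2)
      (fun x ↦ (1 + τ * x ^ α) ^ (-2 : ℝ)) (Ioi 0) :=
    fun x hx ↦ rpow_neg_div_rpow_neg_add_sq hx hτ.le α
  refine ⟨(integrableOn_Ioi_one_add_mul_rpow_rpow_neg hα₀ hτ hα_inv).congr_fun h_eq.symm
    measurableSet_Ioi, ?_⟩
  have h_sin : sin (π / α) ≠ 0 :=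
    (sin_pos_of_pos_of_lt_pi (by positivity) (div_lt_self pi_pos hα)).ne'
  rw [setIntegral_congr_fun measurableSet_Ioi h_eq,
    integral_Ioi_one_add_mul_rpow_rpow_neg hα₀ hτ hα_inv, Gamma_two,
    Gamma_mul_Gamma_two_sub (inv_ne_one.2 hα.ne'), ← div_eq_mul_inv, neg_div, one_div]
  field_simp
end

section
/- Let α > 1 be real, p ≥ 1 an integer, and set λ_i = i^{-α} for i = 1,…,p. Suppose the real n satisfies p·α/(α − 1)² + α²/(α − 1)² < n < p·(3 + 2^{-α})/(4 + 2^{-(α-2)}), let τ > 0 satisfy Σ_{i=1}^p λ_i/(λ_i + τ) = n, and define Ω by n·Ω = Σ_{i=1}^p (λ_i/(λ_i + τ))². Then Ω > (α − 1)/α − (1/α) · ((n + 1 + (p + 1)/(α − 1))/(p + 1))^{2α − 1} − 1/n. -/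
/-!
Write `f x = 1 / (1 + τ x^α)`, so that the `i`-th summand is `f i`. Since
`(x f x)' = (1 - α) f + α f²`, integrating over `[0, p]` gives
`α ∫ f² = (α - 1) ∫ f + p f p ≥ (α - 1) ∫ f`. As `f` is antitone, comparing sums with integrals
gives `n ≤ ∫ f` and `n Ω ≥ ∫ f² - f 0 ² ≥ ∫ f² - 1`. Hence `α n Ω ≥ (α - 1) n - α`, that is
`Ω ≥ (α - 1) / α - 1 / n`, and the power term subtracted in the claim is positive.
-/

open Finset Set intervalIntegral

lemma AntitoneOn.integral_add_sub_le_sum {f : ℝ → ℝ} {x₀ : ℝ} {a : ℕ}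
    (hf : AntitoneOn f (Icc x₀ (x₀ + a))) :
    (∫ x in x₀..x₀ + a, f x) + f (x₀ + a) - f x₀ ≤ ∑ i ∈ range a, f (x₀ + ↑(i + 1)) := by
  have hshift := (sum_range_succ (fun i : ℕ => f (x₀ + i)) a).symm.trans
    (sum_range_succ' (fun i : ℕ => f (x₀ + i)) a)
  simp only [Nat.cast_zero, add_zero] at hshift
  linarith [hf.integral_le_sum]

noncomputable def shrinkage (α τ x : ℝ) : ℝ := (1 + τ * x ^ α)⁻¹

section Shrinkage

variable {α τ x : ℝ}

lemma one_add_mul_rpow_pos (hτ : 0 ≤ τ) (hx : 0 ≤ x) : 0 < 1 + τ * x ^ α := by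
  have := Real.rpow_nonneg hx α
  positivity

lemma shrinkage_nonneg (hτ : 0 ≤ τ) (hx : 0 ≤ x) : 0 ≤ shrinkage α τ x :=
  (inv_pos.2 (one_add_mul_rpow_pos hτ hx)).le

lemma shrinkage_le_one (hτ : 0 ≤ τ) (hx : 0 ≤ x) : shrinkage α τ x ≤ 1 :=
  inv_le_one_of_one_le₀ (le_add_of_nonneg_right (mul_nonneg hτ (Real.rpow_nonneg hx α)))

lemma shrinkage_antitoneOn (hα : 0 ≤ α) (hτ : 0 ≤ τ) : AntitoneOn (shrinkage α τ) (Ici 0) :=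
  fun _ hx _ _ hxy => inv_anti₀ (one_add_mul_rpow_pos hτ hx) <|
    add_le_add_right (mul_le_mul_of_nonneg_left (Real.rpow_le_rpow hx hxy hα) hτ) 1

lemma shrinkage_sq_antitoneOn (hα : 0 ≤ α) (hτ : 0 ≤ τ) :
    AntitoneOn (fun x => shrinkage α τ x ^ 2) (Ici 0) :=
  fun _ hx _ hy hxy => pow_le_pow_left₀ (shrinkage_nonneg hτ hy)
    (shrinkage_antitoneOn hα hτ hx hy hxy) 2

lemma rpow_neg_div_rpow_neg_add (hx : 0 < x) :
    x ^ (-α) / (x ^ (-α) + τ) = shrinkage α τ x := by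
  have := Real.rpow_pos_of_pos hx α
  rw [Real.rpow_neg hx.le, shrinkage]
  field_simp

lemma sum_Icc_comp_rpow_neg_div (g : ℝ → ℝ) (p : ℕ) :
    ∑ i ∈ Icc 1 p, g ((i : ℝ) ^ (-α) / ((i : ℝ) ^ (-α) + τ))
      = ∑ i ∈ range p, g (shrinkage α τ (i + 1)) := by
  rw [← Finset.Ico_add_one_right_eq_Icc, sum_Ico_eq_sum_range, add_tsub_cancel_right]
  refine sum_congr rfl fun i _ => ?_
  rw [rpow_neg_div_rpow_neg_add (by positivity), Nat.cast_add, Nat.cast_one, add_comm]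

lemma hasDerivAt_mul_shrinkage (hα : 1 ≤ α) (hτ : 0 ≤ τ) (hx : 0 ≤ x) :
    HasDerivAt (fun y => y * shrinkage α τ y)
      ((1 - α) * shrinkage α τ x + α * shrinkage α τ x ^ 2) x := by
  have hD := one_add_mul_rpow_pos (α := α) hτ hx
  have hderiv := (hasDerivAt_id x).mul
    ((((Real.hasDerivAt_rpow_const (Or.inr hα)).const_mul τ).const_add 1).inv hD.ne')
  have hpow : x * x ^ (α - 1) = x ^ α := by
    rw [← Real.rpow_one_add' hx (by linarith), add_sub_cancel]
  refine hderiv.congr_deriv ?_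
  simp only [id, shrinkage, Pi.inv_apply]
  field_simp
  linear_combination (-(τ * α)) * hpow

lemma mul_integral_shrinkage_sq (hα : 1 ≤ α) (hτ : 0 ≤ τ) {b : ℝ} (hb : 0 ≤ b) :
    α * ∫ x in 0..b, shrinkage α τ x ^ 2
      = (α - 1) * (∫ x in 0..b, shrinkage α τ x) + b * shrinkage α τ b := by
  have hα0 : 0 ≤ α := zero_le_one.trans hα
  have hsub : uIcc 0 b ⊆ Ici 0 := by rw [uIcc_of_le hb]; exact Icc_subset_Ici_self
  have hf := ((shrinkage_antitoneOn hα0 hτ).mono hsub).intervalIntegrable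
    (μ := MeasureTheory.volume)
  have hf2 := ((shrinkage_sq_antitoneOn hα0 hτ).mono hsub).intervalIntegrable
    (μ := MeasureTheory.volume)
  have hFTC := integral_eq_sub_of_hasDerivAt
    (fun x hx => hasDerivAt_mul_shrinkage hα hτ (hsub hx)) ((hf.const_mul _).add (hf2.const_mul _))
  rw [integral_add (hf.const_mul _) (hf2.const_mul _), integral_const_mul,
    integral_const_mul, zero_mul, sub_zero] at hFTC
  linarith

end Shrinkage

theorem covariance_statistic_nonasymptotic_lower_bound_general
    (α : ℝ) (hα : 1 < α) (p : ℕ)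
    (n : ℝ)
    (hn1 : (p : ℝ) * α / (α - 1) ^ 2 + α ^ 2 / (α - 1) ^ 2 < n)
    (τ : ℝ) (hτ : 0 < τ)
    (hsum : ∑ i ∈ Finset.Icc 1 p, (i : ℝ) ^ (-α) / ((i : ℝ) ^ (-α) + τ) = n)
    (Ω : ℝ)
    (hΩ : n * Ω = ∑ i ∈ Finset.Icc 1 p, ((i : ℝ) ^ (-α) / ((i : ℝ) ^ (-α) + τ)) ^ 2) :
    Ω > (α - 1) / α
      - (1 / α) * ((n + 1 + ((p : ℝ) + 1) / (α - 1)) / ((p : ℝ) + 1)) ^ (2 * α - 1)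
      - 1 / n := by
  have hα0 : 0 ≤ α := by linarith
  have hα1 : 0 < α - 1 := by linarith
  have hn : 0 < n := lt_of_le_of_lt (by positivity) hn1
  have hIcc_sub : Icc (0 : ℝ) (0 + p) ⊆ Ici 0 := Icc_subset_Ici_self
  have hsum_le : n ≤ ∫ x in 0..(p : ℝ), shrinkage α τ x := by
    rw [← hsum]
    exact (sum_Icc_comp_rpow_neg_div id p).trans_le <| by
      simpa using ((shrinkage_antitoneOn hα0 hτ.le).mono hIcc_sub).sum_le_integral
  have hsq_ge : (∫ x in 0..(p : ℝ), shrinkage α τ x ^ 2) - 1 ≤ n * Ω := by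
    rw [hΩ, sum_Icc_comp_rpow_neg_div (· ^ 2)]
    have := ((shrinkage_sq_antitoneOn hα0 hτ.le).mono hIcc_sub).integral_add_sub_le_sum
    simp only [zero_add, Nat.cast_add, Nat.cast_one] at this
    nlinarith [shrinkage_le_one (α := α) hτ.le le_rfl, shrinkage_nonneg (α := α) hτ.le le_rfl]
  have hFTC : (α - 1) * (∫ x in 0..(p : ℝ), shrinkage α τ x)
      ≤ α * ∫ x in 0..(p : ℝ), shrinkage α τ x ^ 2 := by
    rw [mul_integral_shrinkage_sq hα.le hτ.le p.cast_nonneg]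
    nlinarith [shrinkage_nonneg (α := α) hτ.le p.cast_nonneg]
  have hΩ_ge : (α - 1) / α - 1 / n ≤ Ω := by
    rw [div_sub_div _ _ (by positivity) hn.ne', div_le_iff₀ (by positivity)]
    linarith [mul_le_mul_of_nonneg_left hsq_ge hα0, mul_le_mul_of_nonneg_left hsum_le hα1.le]
  have hpow :
      0 < 1 / α * ((n + 1 + ((p : ℝ) + 1) / (α - 1)) / ((p : ℝ) + 1)) ^ (2 * α - 1) := by
    positivity
  linarith

/-- Non-asymptotic lower bound on the covariance statistic `Ω` for the
finite-dimensional power-law covariance `λ_i = i^{-α}`, `i = 1,…,p`. -/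
theorem covariance_statistic_nonasymptotic_lower_bound
    (α : ℝ) (hα : 1 < α) (p : ℕ) (hp : 1 ≤ p)
    (n : ℝ)
    (hn1 : (p : ℝ) * α / (α - 1) ^ 2 + α ^ 2 / (α - 1) ^ 2 < n)
    (hn2 : n < (p : ℝ) * ((3 + (2 : ℝ) ^ (-α)) / (4 + (2 : ℝ) ^ (-(α - 2)))))
    (τ : ℝ) (hτ : 0 < τ)
    (hsum : ∑ i ∈ Finset.Icc 1 p, (i : ℝ) ^ (-α) / ((i : ℝ) ^ (-α) + τ) = n)
    (Ω : ℝ)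
    (hΩ : n * Ω = ∑ i ∈ Finset.Icc 1 p, ((i : ℝ) ^ (-α) / ((i : ℝ) ^ (-α) + τ)) ^ 2) :
    Ω > (α - 1) / α
      - (1 / α) * ((n + 1 + ((p : ℝ) + 1) / (α - 1)) / ((p : ℝ) + 1)) ^ (2 * α - 1)
      - 1 / n :=
  covariance_statistic_nonasymptotic_lower_bound_general α hα p n hn1 τ hτ hsum Ω hΩ
end
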